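/- Let K be a field, G a finite simple graph on [n] and v an internal vertex of G. Then the binomial edge ideal of G decomposes as J_G = J_{G_v} ∩ ((x_v, y_v) + J_{G∖v}), an equality of ideals of S = K[x_1,…,x_n,y_1,…,y_n]. -/

import Mathlib

/-- A maximal clique of a simple graph: a clique that is maximal under inclusion. -/
def MaxClq {V : Type*} (G : SimpleGraph V) (s : Set V) : Prop :=
  G.IsClique s ∧ ∀ t : Set V, G.IsClique t → s ⊆ t → s = t

/-- An internal vertex: a vertex lying in at least two (distinct) maximal cliques. -/
def InternalVtx {V : Type*} (G : SimpleGraph V) (v : V) : Prop :=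
  ∃ s t : Set V, MaxClq G s ∧ MaxClq G t ∧ s ≠ t ∧ v ∈ s ∧ v ∈ t

/-- `iv G`: the number of internal vertices of `G`. -/
noncomputable def ivNum {V : Type*} (G : SimpleGraph V) : ℕ :=
  {v : V | InternalVtx G v}.ncard

/-- `c G`: the number of connected components of `G`. -/
noncomputable def compNum {V : Type*} (G : SimpleGraph V) : ℕ :=
  Nat.card G.ConnectedComponent

/-- `𝒞 G`: the number of maximal cliques of `G`. -/
noncomputable def maxClqNum {V : Type*} (G : SimpleGraph V) : ℕ :=
  {s : Set V | MaxClq G s}.ncard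

/-- `ω G`: the clique number of `G`, the maximum size of a clique. -/
noncomputable def clqNum {V : Type*} (G : SimpleGraph V) : ℕ :=
  sSup {k : ℕ | ∃ s : Set V, G.IsClique s ∧ s.ncard = k}

/-- A set of edges of `G` is clique-disjoint if no two distinct edges of it are both
contained in a single clique of `G`. -/
def CliqueDisjointEdges {V : Type*} (G : SimpleGraph V) (E : Set (Sym2 V)) : Prop :=
  E ⊆ G.edgeSet ∧ ∀ e ∈ E, ∀ f ∈ E, e ≠ f →
    ¬ ∃ s : Set V, G.IsClique s ∧ (∀ x ∈ e, x ∈ s) ∧ (∀ x ∈ f, x ∈ s)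

/-- `η G`: the maximum cardinality of a clique-disjoint set of edges of `G`. -/
noncomputable def etaNum {V : Type*} (G : SimpleGraph V) : ℕ :=
  sSup {k : ℕ | ∃ E : Set (Sym2 V), CliqueDisjointEdges G E ∧ E.ncard = k}

/-- `G_v`: the graph on the same vertex set as `G` whose edges are those of `G` together
with all edges between distinct neighbours of `v`. -/
def addNbrEdges {V : Type*} (G : SimpleGraph V) (v : V) : SimpleGraph V where
  Adj a b := G.Adj a b ∨ (a ≠ b ∧ G.Adj v a ∧ G.Adj v b)
  symm := by
    constructor
    intro a b h
    rcases h with h | ⟨hne, h1, h2⟩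
    · exact Or.inl h.symm
    · exact Or.inr ⟨hne.symm, h2, h1⟩
  loopless := by
    constructor
    intro a h
    rcases h with h | ⟨hne, _, _⟩
    · exact G.loopless.irrefl a h
    · exact hne rfl

/-- The graph `G ∖ v`: the vertex `v` is isolated and the remaining edges are exactly
those of the induced subgraph of `G` on the complement of `v`, so that the binomial
edge ideal generators of `G ∖ v` are exactly those coming from edges of `G` avoiding `v`. -/
def delVtx {V : Type*} (G : SimpleGraph V) (v : V) : SimpleGraph V where
  Adj a b := G.Adj a b ∧ a ≠ v ∧ b ≠ v
  symm := by
    constructor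
    rintro a b ⟨h, ha, hb⟩
    exact ⟨h.symm, hb, ha⟩
  loopless := by
    constructor
    rintro a ⟨h, _, _⟩
    exact G.loopless.irrefl a h

open MvPolynomial in
/-- The binomial edge ideal of a graph `G` on `[n]`, inside
`S = K[x_1, …, x_n, y_1, …, y_n]`, where `x_i = X (Sum.inl i)` and `y_i = X (Sum.inr i)`. -/
noncomputable def binomialEdgeIdeal (K : Type*) [Field K] (n : ℕ) (G : SimpleGraph (Fin n)) :
    Ideal (MvPolynomial (Fin n ⊕ Fin n) K) :=
  Ideal.span {f | ∃ i j : Fin n, G.Adj i j ∧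
    f = X (Sum.inl i) * X (Sum.inr j) - X (Sum.inl j) * X (Sum.inr i)}

/-!
Setting `x_v = y_v = 0` defines an endomorphism `φ` of `S` with `f - φ f ∈ (x_v, y_v)` for
all `f`. A generator `f_ij` of `J_{G_v}` is either fixed by `φ` (if `v ∉ {i, j}`) or is a
generator of `J_G` (if `v ∈ {i, j}`), and `(x_v, y_v) J_{G_v} ⊆ J_G` because for distinct
neighbours `i, j` of `v` one has `x_v f_ij = x_i f_vj - x_j f_vi` (and likewise for `y_v`).
Hence `g - φ g ∈ J_G` for every `g ∈ J_{G_v}`, so `J_{G_v} ∩ (x_v, y_v) ⊆ J_G`. The modular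
law, together with `J_{G∖v} ⊆ J_G ⊆ J_{G_v}`, gives the theorem.
-/

open MvPolynomial

theorem Ideal.sub_map_mem_of_mem_span {R : Type*} [CommRing R] (φ : R →+* R) {I M : Ideal R}
    {t : Set R} (hM : ∀ r, r - φ r ∈ M) (hMt : M * Ideal.span t ≤ I)
    (ht : ∀ g ∈ t, g - φ g ∈ I) {g : R} (hg : g ∈ Ideal.span t) : g - φ g ∈ I := by
  induction hg using Submodule.span_induction with
  | mem g hg => exact ht g hg
  | zero => simp
  | add x y _ _ hx hy =>
    rw [map_add, add_sub_add_comm]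
    exact add_mem hx hy
  | smul a x hx hxI =>
    rw [smul_eq_mul, map_mul, show a * x - φ a * φ x = (a - φ a) * x + φ a * (x - φ x) by ring]
    exact add_mem (hMt (Ideal.mul_mem_mul (hM a) hx)) (I.mul_mem_left _ hxI)

namespace MvPolynomial

variable {σ R : Type*} [CommRing R] (s : Set σ) [DecidablePred (· ∈ s)]

noncomputable def killVars : MvPolynomial σ R →ₐ[R] MvPolynomial σ R :=
  aeval fun u => if u ∈ s then 0 else X u

variable {s}

@[simp]
theorem killVars_X_of_mem {u : σ} (hu : u ∈ s) : killVars (R := R) s (X u) = 0 := by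
  simp [killVars, hu]

@[simp]
theorem killVars_X_of_notMem {u : σ} (hu : u ∉ s) : killVars (R := R) s (X u) = X u := by
  simp [killVars, hu]

theorem span_X_image_le_ker_killVars :
    Ideal.span (X '' s) ≤ RingHom.ker (killVars (R := R) s) := by
  rw [Ideal.span_le]
  rintro _ ⟨u, hu, rfl⟩
  exact killVars_X_of_mem hu

theorem sub_killVars_mem_span_X_image (f : MvPolynomial σ R) :
    f - killVars s f ∈ Ideal.span (X '' s) := by
  induction f using MvPolynomial.induction_on with
  | C a => simp [killVars]
  | add f g hf hg =>
    rw [map_add, add_sub_add_comm]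
    exact add_mem hf hg
  | mul_X f u hf =>
    rw [map_mul]
    by_cases hu : u ∈ s
    · rw [killVars_X_of_mem hu, mul_zero, sub_zero]
      exact Ideal.mul_mem_left _ _ (Ideal.subset_span ⟨u, hu, rfl⟩)
    · rw [killVars_X_of_notMem hu, ← sub_mul]
      exact Ideal.mul_mem_right _ _ hf

end MvPolynomial

section BinomialEdgeIdeal

variable {K : Type*} [Field K] {n : ℕ}

noncomputable def edgeBinomial (i j : Fin n) : MvPolynomial (Fin n ⊕ Fin n) K :=
  X (Sum.inl i) * X (Sum.inr j) - X (Sum.inl j) * X (Sum.inr i)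

theorem edgeBinomial_mem {G : SimpleGraph (Fin n)} {i j : Fin n} (h : G.Adj i j) :
    edgeBinomial i j ∈ binomialEdgeIdeal K n G :=
  Ideal.subset_span ⟨i, j, h, rfl⟩

theorem binomialEdgeIdeal_le_iff {G : SimpleGraph (Fin n)} {I : Ideal _} :
    binomialEdgeIdeal K n G ≤ I ↔ ∀ i j, G.Adj i j → edgeBinomial i j ∈ I := by
  simp only [binomialEdgeIdeal, Ideal.span_le, Set.subset_def, Set.mem_ofPred_eq,
    SetLike.mem_coe]
  refine ⟨fun h i j hij => h _ ⟨i, j, hij, rfl⟩, ?_⟩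
  rintro h _ ⟨i, j, hij, rfl⟩
  exact h i j hij

theorem binomialEdgeIdeal_mono {G H : SimpleGraph (Fin n)} (h : G ≤ H) :
    binomialEdgeIdeal K n G ≤ binomialEdgeIdeal K n H :=
  binomialEdgeIdeal_le_iff.2 fun _ _ hij => edgeBinomial_mem (h hij)

theorem le_addNbrEdges {V : Type*} (G : SimpleGraph V) (v : V) : G ≤ addNbrEdges G v :=
  fun _ _ h => Or.inl h

theorem delVtx_le {V : Type*} (G : SimpleGraph V) (v : V) : delVtx G v ≤ G :=
  fun _ _ h => h.1

theorem X_mul_edgeBinomial (u : Fin n → Fin n ⊕ Fin n) (hu : u = Sum.inl ∨ u = Sum.inr)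
    (v i j : Fin n) :
    (X (u v) : MvPolynomial (Fin n ⊕ Fin n) K) * edgeBinomial i j =
      X (u i) * edgeBinomial v j - X (u j) * edgeBinomial v i := by
  rcases hu with rfl | rfl <;> simp only [edgeBinomial] <;> ring

theorem span_X_pair_mul_addNbrEdges_le (G : SimpleGraph (Fin n)) (v : Fin n) :
    Ideal.span {X (Sum.inl v), X (Sum.inr v)} * binomialEdgeIdeal K n (addNbrEdges G v) ≤
      binomialEdgeIdeal K n G := by
  rw [binomialEdgeIdeal, Ideal.span_mul_span', Ideal.span_le]
  rintro _ ⟨_, hw, _, ⟨i, j, hij, rfl⟩, rfl⟩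
  have key : ∀ u : Fin n → Fin n ⊕ Fin n, (u = Sum.inl ∨ u = Sum.inr) →
      X (u v) * edgeBinomial i j ∈ binomialEdgeIdeal K n G := by
    intro u hu
    rcases hij with hij | ⟨-, hvi, hvj⟩
    · exact Ideal.mul_mem_left _ _ (edgeBinomial_mem hij)
    · rw [X_mul_edgeBinomial u hu]
      exact sub_mem (Ideal.mul_mem_left _ _ (edgeBinomial_mem hvj))
        (Ideal.mul_mem_left _ _ (edgeBinomial_mem hvi))
  rcases hw with rfl | rfl
  exacts [key _ (Or.inl rfl), key _ (Or.inr rfl)]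

theorem sub_killVars_mem_of_mem_addNbrEdges (G : SimpleGraph (Fin n)) (v : Fin n)
    {g : MvPolynomial (Fin n ⊕ Fin n) K} (hg : g ∈ binomialEdgeIdeal K n (addNbrEdges G v)) :
    g - killVars {Sum.inl v, Sum.inr v} g ∈ binomialEdgeIdeal K n G := by
  refine Ideal.sub_map_mem_of_mem_span _
    (sub_killVars_mem_span_X_image (s := {Sum.inl v, Sum.inr v})) ?_ ?_ hg
  · rw [Set.image_pair]
    exact span_X_pair_mul_addNbrEdges_le G v
  rintro _ ⟨i, j, hij, rfl⟩
  change edgeBinomial i j - killVars {Sum.inl v, Sum.inr v} (edgeBinomial i j) ∈ _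
  by_cases hv : i = v ∨ j = v
  · have hG : G.Adj i j := by
      rcases hij with hij | ⟨-, hvi, hvj⟩
      · exact hij
      · rcases hv with rfl | rfl <;> simp at hvi hvj
    have hzero : killVars {Sum.inl v, Sum.inr v} (edgeBinomial (K := K) i j) = 0 := by
      rcases hv with rfl | rfl <;> simp [edgeBinomial]
    rw [hzero, sub_zero]
    exact edgeBinomial_mem hG
  · push Not at hv
    simp [edgeBinomial, hv.1, hv.2]

theorem addNbrEdges_inf_span_X_pair_le (G : SimpleGraph (Fin n)) (v : Fin n) :
    binomialEdgeIdeal K n (addNbrEdges G v) ⊓ Ideal.span {X (Sum.inl v), X (Sum.inr v)} ≤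
      binomialEdgeIdeal K n G := by
  rintro g ⟨hg, hgv⟩
  have hker : killVars {Sum.inl v, Sum.inr v} g = 0 := by
    rw [← Set.image_pair] at hgv
    exact span_X_image_le_ker_killVars hgv
  simpa [hker] using sub_killVars_mem_of_mem_addNbrEdges G v hg

theorem binomialEdgeIdeal_le_span_X_pair_sup_delVtx (G : SimpleGraph (Fin n)) (v : Fin n) :
    binomialEdgeIdeal K n G ≤
      Ideal.span {X (Sum.inl v), X (Sum.inr v)} ⊔ binomialEdgeIdeal K n (delVtx G v) := by
  refine binomialEdgeIdeal_le_iff.2 fun i j hij => ?_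
  by_cases hi : i = v
  · subst hi
    exact Ideal.mem_sup_left (Ideal.mem_span_pair.2
      ⟨X (Sum.inr j), -X (Sum.inl j), by simp only [edgeBinomial]; ring⟩)
  by_cases hj : j = v
  · subst hj
    exact Ideal.mem_sup_left (Ideal.mem_span_pair.2
      ⟨-X (Sum.inr i), X (Sum.inl i), by simp only [edgeBinomial]; ring⟩)
  exact Ideal.mem_sup_right (edgeBinomial_mem ⟨hij, hi, hj⟩)

end BinomialEdgeIdeal

open MvPolynomial in
theorem stmt0_general (K : Type*) [Field K] (n : ℕ) (G : SimpleGraph (Fin n)) (v : Fin n) :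
    binomialEdgeIdeal K n G =
      binomialEdgeIdeal K n (addNbrEdges G v) ⊓
        (Ideal.span {X (Sum.inl v), X (Sum.inr v)} +
          binomialEdgeIdeal K n (delVtx G v)) := by
  have hdel : binomialEdgeIdeal K n (delVtx G v) ≤ binomialEdgeIdeal K n G :=
    binomialEdgeIdeal_mono (delVtx_le G v)
  have hadd : binomialEdgeIdeal K n G ≤ binomialEdgeIdeal K n (addNbrEdges G v) :=
    binomialEdgeIdeal_mono (le_addNbrEdges G v)
  refine le_antisymm (le_inf hadd (binomialEdgeIdeal_le_span_X_pair_sup_delVtx G v)) ?_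
  rw [Ideal.add_eq_sup, sup_comm, inf_comm, sup_inf_assoc_of_le _ (hdel.trans hadd), inf_comm]
  exact sup_le hdel (addNbrEdges_inf_span_X_pair_le G v)

open MvPolynomial in
/-- if `v` is an internal vertex of `G`, then
`J_G = J_{G_v} ∩ ((x_v, y_v) + J_{G ∖ v})` as ideals of `S = K[x_1,…,x_n,y_1,…,y_n]`. -/
theorem stmt0 (K : Type*) [Field K] (n : ℕ) (G : SimpleGraph (Fin n)) (v : Fin n)
    (hv : InternalVtx G v) :
    binomialEdgeIdeal K n G =
      binomialEdgeIdeal K n (addNbrEdges G v) ⊓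
        (Ideal.span {X (Sum.inl v), X (Sum.inr v)} +
          binomialEdgeIdeal K n (delVtx G v)) :=
  stmt0_general K n G v
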